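/- Let G be a connected multigraph each of whose two-connected components is a series-parallel network. Then every complex zero q of the reliability polynomial R_G(q) satisfies |q| ≤ 1. -/

import Mathlib

structure Multigraph where
  V : Type
  E : Type
  [fV : Fintype V]
  [dV : DecidableEq V]
  [fE : Fintype E]
  [dE : DecidableEq E]
  ends : E → Sym2 V

attribute [instance] Multigraph.fV Multigraph.dV Multigraph.fE Multigraph.dE

/-- The edges in `S` induce a connected spanning subgraph. -/
def Multigraph.ConnectedOn (G : Multigraph) (S : Finset G.E) : Prop :=
  ∀ v w : G.V, Relation.ReflTransGen (fun a b => ∃ e ∈ S, G.ends e = s(a, b)) v w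

def Multigraph.Connected (G : Multigraph) : Prop :=
  G.ConnectedOn Finset.univ

open Polynomial in
open scoped Classical in
/-- The reliability polynomial of a multigraph. -/
noncomputable def Multigraph.rel (G : Multigraph) : Polynomial ℂ :=
  ∑ S : Finset G.E,
    if G.ConnectedOn S then X ^ (Fintype.card G.E - S.card) * (1 - X) ^ S.card else 0

/-- One-point union: `G` and `N` share exactly the vertex `x = y` and no edges. -/
def Multigraph.wedge (G N : Multigraph) (x : G.V) (y : N.V) : Multigraph :=
  { V := G.V ⊕ {w : N.V // w ≠ y}, E := G.E ⊕ N.E,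
    ends := fun e =>
      Sum.elim (fun eg => Sym2.map Sum.inl (G.ends eg))
        (fun en =>
          Sym2.map
            (fun w => if h : w = y then Sum.inl x else Sum.inr (⟨w, h⟩ : {w : N.V // w ≠ y}))
            (N.ends en)) e }

/-- Two-point union: `G` and `N` share exactly the two vertices `x = x'` and `y = y'`,
and no edges. -/
def Multigraph.pwedge (G N : Multigraph) (x y : G.V) (x' y' : N.V) : Multigraph :=
  { V := G.V ⊕ {w : N.V // w ≠ x' ∧ w ≠ y'}, E := G.E ⊕ N.E,
    ends := fun e =>
      Sum.elim (fun eg => Sym2.map Sum.inl (G.ends eg))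
        (fun en =>
          Sym2.map
            (fun w =>
              if h1 : w = x' then Sum.inl x
              else if h2 : w = y' then Sum.inl y
              else Sum.inr (⟨w, h1, h2⟩ : {w : N.V // w ≠ x' ∧ w ≠ y'}))
            (N.ends en)) e }

/-- Isomorphism of multigraphs. -/
def Multigraph.IsIsoTo (G H : Multigraph) : Prop :=
  ∃ (f : G.V ≃ H.V) (g : G.E ≃ H.E), ∀ e : G.E, H.ends (g e) = Sym2.map f (G.ends e)

/-- `IsSP G a b`: `G` is a series-parallel network with terminals `a` and `b`:
either a single edge joining its two vertices `a ≠ b`, or a series or parallel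
connection of two edge-disjoint series-parallel networks. -/
inductive IsSP : (G : Multigraph) → G.V → G.V → Prop where
  | edge (G : Multigraph) (a b : G.V) (hab : a ≠ b)
      (hV : ∀ v : G.V, v = a ∨ v = b)
      (hE : ∃ e : G.E, (∀ e' : G.E, e' = e) ∧ G.ends e = s(a, b)) :
      IsSP G a b
  | series {G N : Multigraph} {a b : G.V} {a' b' : N.V}
      (hG : IsSP G a b) (hN : IsSP N a' b') (h : b' ≠ a') :
      IsSP (G.wedge N b a') (Sum.inl a) (Sum.inr ⟨b', h⟩)
  | parallel {G N : Multigraph} {a b : G.V} {a' b' : N.V}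
      (hG : IsSP G a b) (hN : IsSP N a' b') :
      IsSP (G.pwedge N a b a' b') (Sum.inl a) (Sum.inl b)

/-- The class `𝔖𝔓'` of connected multigraphs each of whose two-connected components is a
series-parallel network: single vertices, series-parallel networks, one-point unions of
members of the class, and anything isomorphic to a member of the class. -/
inductive InSPclass : Multigraph → Prop where
  | vertex (G : Multigraph) (hv : ∀ v w : G.V, v = w) (hne : Nonempty G.V)
      (hE : IsEmpty G.E) : InSPclass G
  | sp {G : Multigraph} {a b : G.V} (h : IsSP G a b) : InSPclass G
  | glue {G N : Multigraph} (x : G.V) (y : N.V)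
      (hG : InSPclass G) (hN : InSPclass N) : InSPclass (G.wedge N x y)
  | iso {G H : Multigraph} (hG : InSPclass G) (h : G.IsIsoTo H) : InSPclass H

/-!
Fix `q` with `|q| > 1`. For a series-parallel network `G` with terminals `a, b` put `R = R_G(q)`
and let `T` be the probability that the surviving edges form exactly two components, one through
each terminal. By induction on the network, `R ≠ 0` and `|T + R| < |T|`, i.e. `R / T` lies in the
open unit disc about `-1`, equivalently `Re (T / R) < -1/2`. A single edge has `R = 1 - q`,
`T = q`. A series connection has `R = R₁R₂` and `T = R₁T₂ + T₁R₂`, so `T / R` is additive and the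
half-plane is preserved. A parallel connection has `T = T₁T₂` and `T + R = (T₁ + R₁)(T₂ + R₂)`, so
`1 + R / T` is multiplicative and the disc is preserved. Finally `R_G` is multiplicative under
one-point unions and invariant under isomorphism, so no graph of the class has a zero with
`|q| > 1`.
-/

open Polynomial Finset

namespace Multigraph

variable {G H : Multigraph} {S : Finset G.E} {u v w : G.V}

def Reach (G : Multigraph) (S : Finset G.E) : G.V → G.V → Prop :=
  Relation.ReflTransGen fun a b => ∃ e ∈ S, G.ends e = s(a, b)

namespace Reach

theorem refl (u : G.V) : G.Reach S u u := Relation.ReflTransGen.refl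

theorem trans (h : G.Reach S u v) (h' : G.Reach S v w) : G.Reach S u w :=
  Relation.ReflTransGen.trans h h'

theorem of_mem_ends {e : G.E} (he : e ∈ S) (hu : u ∈ G.ends e) (hv : v ∈ G.ends e) :
    G.Reach S u v := by
  obtain ⟨u', hends⟩ := Sym2.mem_iff_exists.mp hu
  rcases Sym2.mem_iff.mp (hends ▸ hv) with rfl | rfl
  · exact refl v
  · exact .single ⟨e, he, hends⟩

theorem of_mem_map_ends {V' : Type*} {f : V' → G.V} {e : G.E} (he : e ∈ S) {z : Sym2 V'}
    (hz : G.ends e = z.map f) {u v : V'} (hu : u ∈ z) (hv : v ∈ z) : G.Reach S (f u) (f v) :=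
  of_mem_ends he (hz ▸ Sym2.mem_map.mpr ⟨u, hu, rfl⟩)
    (hz ▸ Sym2.mem_map.mpr ⟨v, hv, rfl⟩)

theorem invariant {P : G.V → Prop}
    (hP : ∀ e ∈ S, ∀ u ∈ G.ends e, ∀ v ∈ G.ends e, P u → P v)
    (h : G.Reach S u v) (hu : P u) : P v := by
  induction h with
  | refl => exact hu
  | tail _ hstep ih =>
    obtain ⟨e, he, hends⟩ := hstep
    exact hP e he _ (hends ▸ Sym2.mem_mk_left _ _) _ (hends ▸ Sym2.mem_mk_right _ _) ih

theorem symm (h : G.Reach S u v) : G.Reach S v u :=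
  h.invariant (P := (G.Reach S · u))
    (fun _ he _ hu' _ hv' h' => (of_mem_ends he hv' hu').trans h') (refl u)

theorem comm : G.Reach S u v ↔ G.Reach S v u := ⟨symm, symm⟩

theorem map {T : Finset H.E} (f : G.V → H.V)
    (hf : ∀ e ∈ S, ∀ u ∈ G.ends e, ∀ v ∈ G.ends e, H.Reach T (f u) (f v))
    (h : G.Reach S u v) : H.Reach T (f u) (f v) :=
  h.invariant (P := (H.Reach T (f u) <| f ·))
    (fun e he _ hu' _ hv' h' => h'.trans (hf e he _ hu' _ hv')) (refl _)

end Reach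

theorem reach_empty_iff : G.Reach ∅ u v ↔ u = v :=
  ⟨fun h => h.invariant (P := (u = ·)) (by simp) rfl, fun h => h ▸ .refl u⟩

def RootedOn (G : Multigraph) (a b : G.V) (S : Finset G.E) : Prop :=
  ∀ v, G.Reach S v a ∨ G.Reach S v b

def SplitOn (G : Multigraph) (a b : G.V) (S : Finset G.E) : Prop :=
  G.RootedOn a b S ∧ ¬ G.Reach S a b

theorem connectedOn_iff_rootedOn (a b : G.V) :
    G.ConnectedOn S ↔ G.RootedOn a b S ∧ G.Reach S a b := by
  refine ⟨fun h => ⟨fun v => .inl (h v a), h a b⟩, fun ⟨hr, hab⟩ v w => ?_⟩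
  have toA : ∀ v, G.Reach S v a := fun v => (hr v).elim id (·.trans hab.symm)
  exact (toA v).trans (toA w).symm

theorem ConnectedOn.not_splitOn {a b : G.V} (h : G.ConnectedOn S) : ¬ G.SplitOn a b S :=
  fun hs => hs.2 (h a b)

theorem connectedOn_of_forall_reach (z : G.V) (h : ∀ v, G.Reach S v z) : G.ConnectedOn S :=
  (connectedOn_iff_rootedOn z z).2 ⟨fun v => .inl (h v), .refl z⟩

end Multigraph

open scoped Classical in
/-- The probability that the set of surviving elements has property `c`, as a polynomial in the
probability `X` with which each element is independently deleted. -/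
noncomputable def survivalPoly (R : Type*) [CommRing R] {α : Type*} [Fintype α]
    (c : Finset α → Prop) : R[X] :=
  ∑ S : Finset α, if c S then X ^ (Fintype.card α - #S) * (1 - X) ^ #S else 0

section survivalPoly

variable {R : Type*} [CommRing R] {α β : Type*} [Fintype α] [Fintype β]

theorem survivalPoly_congr {c c' : Finset α → Prop} (h : ∀ S, c S ↔ c' S) :
    survivalPoly R c = survivalPoly R c' :=
  congrArg _ (funext fun S => propext (h S))

theorem survivalPoly_or {c c' : Finset α → Prop} (h : ∀ S, ¬ (c S ∧ c' S)) :
    survivalPoly R (fun S => c S ∨ c' S) = survivalPoly R c + survivalPoly R c' := by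
  classical
  simp only [survivalPoly, ← sum_add_distrib]
  refine sum_congr rfl fun S _ => ?_
  by_cases hc : c S <;> by_cases hc' : c' S
  · exact absurd ⟨hc, hc'⟩ (h S)
  all_goals simp [hc, hc']

theorem survivalPoly_toLeft_and_toRight (c₁ : Finset α → Prop) (c₂ : Finset β → Prop) :
    survivalPoly R (fun S : Finset (α ⊕ β) => c₁ S.toLeft ∧ c₂ S.toRight)
      = survivalPoly R c₁ * survivalPoly R c₂ := by
  classical
  simp only [survivalPoly, sum_mul_sum, ← Fintype.sum_prod_type']
  refine Fintype.sum_equiv sumEquiv.toEquiv _ _ fun S => ?_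
  simp only [sumEquiv, Equiv.coe_fn_mk]
  by_cases h₁ : c₁ S.toLeft <;> by_cases h₂ : c₂ S.toRight <;>
    simp only [h₁, h₂, and_self, and_false, false_and, if_true, if_false, mul_zero, zero_mul]
  have hcard := card_toLeft_add_card_toRight (u := S)
  have hα : #S.toLeft ≤ Fintype.card α := card_le_univ _
  have hβ : #S.toRight ≤ Fintype.card β := card_le_univ _
  rw [Fintype.card_sum, ← hcard, show Fintype.card α + Fintype.card β - (#S.toLeft + #S.toRight)
    = (Fintype.card α - #S.toLeft) + (Fintype.card β - #S.toRight) by omega]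
  ring

theorem survivalPoly_map_equiv (g : α ≃ β) (c : Finset β → Prop) :
    survivalPoly R c = survivalPoly R (fun S => c (S.map g.toEmbedding)) := by
  classical
  refine (Fintype.sum_equiv g.finsetCongr _ _ fun S => ?_).symm
  simp [Fintype.card_congr g]

theorem survivalPoly_of_isEmpty [IsEmpty α] (c : Finset α → Prop) [Decidable (c ∅)] :
    survivalPoly R c = if c ∅ then 1 else 0 := by
  classical
  rw [survivalPoly, Fintype.sum_unique, Subsingleton.elim default ∅]
  simp

theorem survivalPoly_of_forall_eq {e : α} (he : ∀ e', e' = e) (c : Finset α → Prop)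
    [Decidable (c ∅)] [Decidable (c {e})] :
    survivalPoly R c = (if c ∅ then X else 0) + if c {e} then 1 - X else 0 := by
  classical
  have huniv : (univ : Finset α) = {e} :=
    eq_singleton_iff_unique_mem.2 ⟨mem_univ e, fun x _ => he x⟩
  have hcard : Fintype.card α = 1 := Fintype.card_eq_one_iff.2 ⟨e, he⟩
  conv_lhs => rw [survivalPoly, ← powerset_univ, huniv, ← insert_empty,
    sum_powerset_insert (notMem_empty e), powerset_empty, sum_singleton, sum_singleton,
    insert_empty]
  simp [hcard]

end survivalPoly

namespace Multigraph

open Sum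

variable {G H : Multigraph}

theorem rel_eq_survivalPoly (G : Multigraph) : G.rel = survivalPoly ℂ G.ConnectedOn := rfl

noncomputable def splitPoly (G : Multigraph) (a b : G.V) : ℂ[X] :=
  survivalPoly ℂ (G.SplitOn a b)

theorem rel_eq_of_isIsoTo (h : G.IsIsoTo H) : H.rel = G.rel := by
  obtain ⟨f, g, hfg⟩ := h
  rw [rel_eq_survivalPoly, survivalPoly_map_equiv g]
  refine survivalPoly_congr fun T => ⟨fun hT u v => ?_, fun hT p q => ?_⟩
  · show G.Reach T u v
    simpa using Reach.map (T := T) f.symm (fun e' he' p hp q hq => by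
      obtain ⟨e, he, rfl⟩ := mem_map.mp he'
      rw [show H.ends (g.toEmbedding e) = _ from hfg e] at hp hq
      obtain ⟨c, hc, rfl⟩ := Sym2.mem_map.mp hp
      obtain ⟨d, hd, rfl⟩ := Sym2.mem_map.mp hq
      simpa using Reach.of_mem_ends he hc hd) (hT (f u) (f v))
  · show H.Reach _ p q
    simpa using Reach.map (T := T.map g.toEmbedding) f
      (fun e he c hc d hd => .of_mem_map_ends (mem_map_of_mem _ he) (hfg e) hc hd)
      (hT (f.symm p) (f.symm q))

theorem rel_of_subsingleton [IsEmpty G.E] (hV : ∀ v w : G.V, v = w) :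
    G.rel = 1 := by
  classical
  have h : G.ConnectedOn ∅ := fun v w => hV v w ▸ Reach.refl v
  rw [rel_eq_survivalPoly, survivalPoly_of_isEmpty, if_pos h]

section Edge

variable {a b : G.V} (hab : a ≠ b) (hV : ∀ v : G.V, v = a ∨ v = b) {e : G.E}
  (he : ∀ e' : G.E, e' = e) (hends : G.ends e = s(a, b))

include hV in
theorem rootedOn_of_forall_eq_or_eq {S : Finset G.E} : G.RootedOn a b S := by
  intro v
  rcases hV v with rfl | rfl
  exacts [.inl (.refl v), .inr (.refl v)]

include hab hV he hends in
theorem rel_single_edge : G.rel = 1 - X := by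
  classical
  have h_empty : ¬ G.ConnectedOn ∅ := fun h => hab (reach_empty_iff.mp (h a b))
  have h_single : G.ConnectedOn {e} := (connectedOn_iff_rootedOn a b).2
    ⟨rootedOn_of_forall_eq_or_eq hV, .single ⟨e, mem_singleton_self e, hends⟩⟩
  rw [rel_eq_survivalPoly, survivalPoly_of_forall_eq he, if_neg h_empty, if_pos h_single,
    zero_add]

include hab hV he hends in
theorem splitPoly_single_edge : G.splitPoly a b = X := by
  classical
  have h_empty : G.SplitOn a b ∅ := ⟨rootedOn_of_forall_eq_or_eq hV, hab ∘ reach_empty_iff.mp⟩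
  have h_single : ¬ G.SplitOn a b {e} :=
    fun h => h.2 (.single ⟨e, mem_singleton_self e, hends⟩)
  rw [splitPoly, survivalPoly_of_forall_eq he, if_pos h_empty, if_neg h_single, add_zero]

end Edge

section Wedge

variable (G N : Multigraph) (x : G.V) (y : N.V)

def wedgeRight (w : N.V) : (G.wedge N x y).V :=
  if h : w = y then inl x else inr ⟨w, h⟩

def wedgeProjLeft : (G.wedge N x y).V → G.V := Sum.elim id fun _ => x

def wedgeProjRight : (G.wedge N x y).V → N.V := Sum.elim (fun _ => y) Subtype.val

variable {G N x y}

theorem wedge_ends_inl (e : G.E) :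
    (G.wedge N x y).ends (inl e) = (G.ends e).map inl := rfl

theorem wedge_ends_inr (e : N.E) :
    (G.wedge N x y).ends (inr e) = (N.ends e).map (G.wedgeRight N x y) := rfl

@[simp] theorem wedgeRight_self : G.wedgeRight N x y y = inl x := dif_pos rfl

@[simp] theorem wedgeRight_val (w : {w : N.V // w ≠ y}) : G.wedgeRight N x y w = inr w :=
  dif_neg w.2

@[simp] theorem wedgeProjLeft_inl (v : G.V) : wedgeProjLeft G N x y (inl v) = v := rfl

@[simp] theorem wedgeProjRight_inl (v : G.V) : wedgeProjRight G N x y (inl v) = y := rfl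

@[simp] theorem wedgeProjLeft_wedgeRight (w : N.V) :
    wedgeProjLeft G N x y (G.wedgeRight N x y w) = x := by
  by_cases h : w = y <;> simp [wedgeRight, wedgeProjLeft, h]

@[simp] theorem wedgeProjRight_wedgeRight (w : N.V) :
    wedgeProjRight G N x y (G.wedgeRight N x y w) = w := by
  by_cases h : w = y <;> simp [wedgeRight, wedgeProjRight, h]

theorem wedge_forall {P : (G.wedge N x y).V → Prop} :
    (∀ u, P u) ↔ (∀ v, P (inl v)) ∧ ∀ w, P (G.wedgeRight N x y w) := by
  refine ⟨fun h => ⟨fun v => h _, fun w => h _⟩, fun ⟨hl, hr⟩ u => ?_⟩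
  rcases u with v | w
  · exact hl v
  · simpa using hr w

variable {S : Finset (G.wedge N x y).E} {u v : G.V} {w w' : N.V}

theorem wedge_forall_ends {P : (G.wedge N x y).V → (G.wedge N x y).V → Prop}
    (hG : ∀ e ∈ S.toLeft, ∀ c ∈ G.ends e, ∀ c' ∈ G.ends e, P (inl c) (inl c'))
    (hN : ∀ e ∈ S.toRight, ∀ c ∈ N.ends e, ∀ c' ∈ N.ends e,
      P (G.wedgeRight N x y c) (G.wedgeRight N x y c')) :
    ∀ e ∈ S, ∀ q ∈ (G.wedge N x y).ends e, ∀ q' ∈ (G.wedge N x y).ends e, P q q' := by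
  rintro (e | e) he q hq q' hq'
  · rw [wedge_ends_inl] at hq hq'
    obtain ⟨c, hc, rfl⟩ := Sym2.mem_map.mp hq
    obtain ⟨c', hc', rfl⟩ := Sym2.mem_map.mp hq'
    exact hG e (mem_toLeft.mpr he) c hc c' hc'
  · rw [wedge_ends_inr] at hq hq'
    obtain ⟨c, hc, rfl⟩ := Sym2.mem_map.mp hq
    obtain ⟨c', hc', rfl⟩ := Sym2.mem_map.mp hq'
    exact hN e (mem_toRight.mpr he) c hc c' hc'

theorem Reach.wedge_inl (h : G.Reach S.toLeft u v) :
    (G.wedge N x y).Reach S (inl u) (inl v) :=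
  h.map (T := S) inl fun _ he _ hu _ hv =>
    .of_mem_map_ends (mem_toLeft.mp he) (wedge_ends_inl ..) hu hv

theorem Reach.wedgeRight (h : N.Reach S.toRight w w') :
    (G.wedge N x y).Reach S (G.wedgeRight N x y w) (G.wedgeRight N x y w') :=
  h.map (T := S) _ fun _ he _ hu _ hv =>
    .of_mem_map_ends (mem_toRight.mp he) (wedge_ends_inr ..) hu hv

theorem Reach.wedgeProjLeft {p p' : (G.wedge N x y).V} (h : (G.wedge N x y).Reach S p p') :
    G.Reach S.toLeft (wedgeProjLeft G N x y p) (wedgeProjLeft G N x y p') :=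
  h.map _ <| wedge_forall_ends (fun _ he _ hc _ hc' => .of_mem_ends he hc hc')
    fun _ _ _ _ _ _ => by simpa using Reach.refl x

theorem Reach.wedgeProjRight {p p' : (G.wedge N x y).V} (h : (G.wedge N x y).Reach S p p') :
    N.Reach S.toRight (wedgeProjRight G N x y p) (wedgeProjRight G N x y p') :=
  h.map _ <| wedge_forall_ends (fun _ _ _ _ _ _ => .refl y)
    fun _ he _ hc _ hc' => by simpa using Reach.of_mem_ends he hc hc'

theorem reach_wedge_inl_inl :
    (G.wedge N x y).Reach S (inl u) (inl v) ↔ G.Reach S.toLeft u v :=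
  ⟨fun h => by simpa using h.wedgeProjLeft, Reach.wedge_inl⟩

theorem reach_wedgeRight_wedgeRight :
    (G.wedge N x y).Reach S (G.wedgeRight N x y w) (G.wedgeRight N x y w') ↔
      N.Reach S.toRight w w' :=
  ⟨fun h => by simpa using h.wedgeProjRight, Reach.wedgeRight⟩

theorem reach_wedge_inl_wedgeRight :
    (G.wedge N x y).Reach S (inl u) (G.wedgeRight N x y w) ↔
      G.Reach S.toLeft u x ∧ N.Reach S.toRight y w := by
  refine ⟨fun h => ⟨by simpa using h.wedgeProjLeft, by simpa using h.wedgeProjRight⟩,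
    fun ⟨hG, hN⟩ => ?_⟩
  have hN' := hN.wedgeRight (G := G) (x := x)
  rw [wedgeRight_self] at hN'
  exact hG.wedge_inl.trans hN'

theorem reach_wedgeRight_inl :
    (G.wedge N x y).Reach S (G.wedgeRight N x y w) (inl u) ↔
      N.Reach S.toRight w y ∧ G.Reach S.toLeft x u := by
  refine Reach.comm.trans (reach_wedge_inl_wedgeRight.trans ?_)
  rw [and_comm, Reach.comm (u := x), Reach.comm (u := y)]

theorem connectedOn_wedge_iff :
    (G.wedge N x y).ConnectedOn S ↔ G.ConnectedOn S.toLeft ∧ N.ConnectedOn S.toRight := by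
  refine ⟨fun h => ⟨fun v v' => reach_wedge_inl_inl.mp (h _ _),
    fun w w' => reach_wedgeRight_wedgeRight.mp (h _ _)⟩, fun ⟨hG, hN⟩ => ?_⟩
  refine connectedOn_of_forall_reach (inl x)
    (wedge_forall.mpr ⟨fun v => Reach.wedge_inl (hG v x), fun w => ?_⟩)
  simpa using Reach.wedgeRight (G := G) (x := x) (hN w y)

theorem rootedOn_wedge_iff {t : G.V} {s : N.V} :
    (G.wedge N x y).RootedOn (inl t) (G.wedgeRight N x y s) S ↔
      G.RootedOn t x S.toLeft ∧ N.RootedOn y s S.toRight ∧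
        (G.Reach S.toLeft t x ∨ N.Reach S.toRight y s) := by
  simp only [RootedOn, wedge_forall, reach_wedge_inl_inl, reach_wedge_inl_wedgeRight,
    reach_wedgeRight_inl, reach_wedgeRight_wedgeRight]
  constructor
  · rintro ⟨hG, hN⟩
    exact ⟨fun v => (hG v).imp_right And.left, fun w => (hN w).imp_left And.left,
      (hG x).elim (fun h => .inl h.symm) (fun h => .inr h.2)⟩
  · rintro ⟨hG, hN, htx | hys⟩
    · exact ⟨fun v => (hG v).elim .inl (fun h => .inl (h.trans htx.symm)),
        fun w => (hN w).imp_left (⟨·, htx.symm⟩)⟩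
    · exact ⟨fun v => (hG v).imp_right (⟨·, hys⟩),
        fun w => (hN w).elim (fun h => .inr (h.trans hys)) .inr⟩

theorem splitOn_wedge_iff {t : G.V} {s : N.V} :
    (G.wedge N x y).SplitOn (inl t) (G.wedgeRight N x y s) S ↔
      G.ConnectedOn S.toLeft ∧ N.SplitOn y s S.toRight ∨
        G.SplitOn t x S.toLeft ∧ N.ConnectedOn S.toRight := by
  unfold SplitOn
  rw [rootedOn_wedge_iff, reach_wedge_inl_wedgeRight, connectedOn_iff_rootedOn t x,
    connectedOn_iff_rootedOn y s]
  tauto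

variable (G N x y)

theorem rel_wedge : (G.wedge N x y).rel = G.rel * N.rel :=
  (survivalPoly_congr fun _ => connectedOn_wedge_iff).trans
    (survivalPoly_toLeft_and_toRight _ _)

theorem splitPoly_wedge {t : G.V} {s : N.V} (hs : s ≠ y) :
    (G.wedge N x y).splitPoly (inl t) (inr ⟨s, hs⟩)
      = G.rel * N.splitPoly y s + G.splitPoly t x * N.rel := by
  rw [← wedgeRight_val ⟨s, hs⟩]
  simp only [splitPoly, rel_eq_survivalPoly]
  rw [survivalPoly_congr fun _ => splitOn_wedge_iff, survivalPoly_or]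
  · exact congrArg₂ (· + ·) (survivalPoly_toLeft_and_toRight _ _)
      (survivalPoly_toLeft_and_toRight _ _)
  · rintro _ ⟨⟨hG, -⟩, hG', -⟩
    exact hG.not_splitOn hG'

end Wedge

section Pwedge

variable (G N : Multigraph) (a b : G.V) (a' b' : N.V)

-- The `dite` is elaborated at the underlying sum type so that `dif_pos`/`dif_neg` apply to it.
def pwedgeRight (w : N.V) : (G.pwedge N a b a' b').V :=
  (if h₁ : w = a' then inl a else if h₂ : w = b' then inl b else inr ⟨w, h₁, h₂⟩ :
    G.V ⊕ {w : N.V // w ≠ a' ∧ w ≠ b'})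

def pwedgeProjLeft : (G.pwedge N a b a' b').V → G.V := Sum.elim id fun _ => a

def pwedgeProjRight : (G.pwedge N a b a' b').V → N.V :=
  Sum.elim (fun v => if v = a then a' else b') Subtype.val

variable {G N a b a' b'}

theorem pwedge_ends_inl (e : G.E) :
    (G.pwedge N a b a' b').ends (inl e) = (G.ends e).map inl := rfl

theorem pwedge_ends_inr (e : N.E) :
    (G.pwedge N a b a' b').ends (inr e) = (N.ends e).map (G.pwedgeRight N a b a' b') := rfl

@[simp] theorem pwedgeRight_left : G.pwedgeRight N a b a' b' a' = inl a := dif_pos rfl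

theorem pwedgeRight_right (h : a' ≠ b') : G.pwedgeRight N a b a' b' b' = inl b :=
  (dif_neg h.symm).trans (dif_pos rfl)

theorem pwedgeRight_of_ne {w : N.V} (h₁ : w ≠ a') (h₂ : w ≠ b') :
    G.pwedgeRight N a b a' b' w = inr ⟨w, h₁, h₂⟩ :=
  (dif_neg h₁).trans (dif_neg h₂)

@[simp] theorem pwedgeProjLeft_inl (v : G.V) : pwedgeProjLeft G N a b a' b' (inl v) = v := rfl

theorem pwedgeProjLeft_pwedgeRight (w : N.V) :
    pwedgeProjLeft G N a b a' b' (G.pwedgeRight N a b a' b' w) = a ∨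
      pwedgeProjLeft G N a b a' b' (G.pwedgeRight N a b a' b' w) = b := by
  by_cases h₁ : w = a'
  · subst h₁; simp
  by_cases h₂ : w = b'
  · subst h₂; simp [pwedgeRight_right (Ne.symm h₁)]
  · exact .inl (by rw [pwedgeRight_of_ne h₁ h₂]; rfl)

theorem pwedgeProjRight_inl (v : G.V) :
    pwedgeProjRight G N a b a' b' (inl v) = a' ∨ pwedgeProjRight G N a b a' b' (inl v) = b' := by
  by_cases h : v = a
  · exact .inl (if_pos h)
  · exact .inr (if_neg h)

theorem pwedgeProjRight_pwedgeRight (hab : a ≠ b) (w : N.V) :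
    pwedgeProjRight G N a b a' b' (G.pwedgeRight N a b a' b' w) = w := by
  by_cases h₁ : w = a'
  · subst h₁; rw [pwedgeRight_left]; exact if_pos rfl
  by_cases h₂ : w = b'
  · subst h₂; rw [pwedgeRight_right (Ne.symm h₁)]; exact if_neg hab.symm
  · rw [pwedgeRight_of_ne h₁ h₂]; rfl

theorem pwedge_forall {P : (G.pwedge N a b a' b').V → Prop} :
    (∀ u, P u) ↔ (∀ v, P (inl v)) ∧ ∀ w, P (G.pwedgeRight N a b a' b' w) := by
  refine ⟨fun h => ⟨fun v => h _, fun w => h _⟩, fun ⟨hl, hr⟩ u => ?_⟩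
  rcases u with v | ⟨w, h₁, h₂⟩
  · exact hl v
  · simpa [pwedgeRight_of_ne h₁ h₂] using hr w

variable {S : Finset (G.pwedge N a b a' b').E} {u v : G.V} {w w' : N.V}

theorem pwedge_forall_ends {P : (G.pwedge N a b a' b').V → (G.pwedge N a b a' b').V → Prop}
    (hG : ∀ e ∈ S.toLeft, ∀ c ∈ G.ends e, ∀ c' ∈ G.ends e, P (inl c) (inl c'))
    (hN : ∀ e ∈ S.toRight, ∀ c ∈ N.ends e, ∀ c' ∈ N.ends e,
      P (G.pwedgeRight N a b a' b' c) (G.pwedgeRight N a b a' b' c')) :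
    ∀ e ∈ S, ∀ q ∈ (G.pwedge N a b a' b').ends e, ∀ q' ∈ (G.pwedge N a b a' b').ends e,
      P q q' := by
  rintro (e | e) he q hq q' hq'
  · rw [pwedge_ends_inl] at hq hq'
    obtain ⟨c, hc, rfl⟩ := Sym2.mem_map.mp hq
    obtain ⟨c', hc', rfl⟩ := Sym2.mem_map.mp hq'
    exact hG e (mem_toLeft.mpr he) c hc c' hc'
  · rw [pwedge_ends_inr] at hq hq'
    obtain ⟨c, hc, rfl⟩ := Sym2.mem_map.mp hq
    obtain ⟨c', hc', rfl⟩ := Sym2.mem_map.mp hq'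
    exact hN e (mem_toRight.mpr he) c hc c' hc'

theorem Reach.pwedge_inl (h : G.Reach S.toLeft u v) :
    (G.pwedge N a b a' b').Reach S (inl u) (inl v) :=
  h.map (T := S) inl fun _ he _ hu _ hv =>
    .of_mem_map_ends (mem_toLeft.mp he) (pwedge_ends_inl ..) hu hv

theorem Reach.pwedgeRight (h : N.Reach S.toRight w w') :
    (G.pwedge N a b a' b').Reach S (G.pwedgeRight N a b a' b' w) (G.pwedgeRight N a b a' b' w') :=
  h.map (T := S) _ fun _ he _ hu _ hv =>
    .of_mem_map_ends (mem_toRight.mp he) (pwedge_ends_inr ..) hu hv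

theorem RootedOn.of_pwedge_left (h : (G.pwedge N a b a' b').RootedOn (inl a) (inl b) S) :
    G.RootedOn a b S.toLeft := by
  let P q := G.Reach S.toLeft (pwedgeProjLeft G N a b a' b' q) a ∨
    G.Reach S.toLeft (pwedgeProjLeft G N a b a' b' q) b
  have hP_right : ∀ w, P (G.pwedgeRight N a b a' b' w) := fun w => by
    rcases pwedgeProjLeft_pwedgeRight (G := G) (a := a) (b := b) (a' := a') (b' := b') w
      with h | h <;> simp only [P, h]
    exacts [.inl (.refl a), .inr (.refl b)]
  have hP := pwedge_forall_ends (P := fun q q' => P q → P q')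
    (fun e he c hc c' hc' hPc => hPc.imp (Reach.of_mem_ends he hc' hc).trans
      (Reach.of_mem_ends he hc' hc).trans)
    fun _ _ _ _ c' _ _ => hP_right c'
  intro v
  rcases h (inl v) with h | h
  exacts [h.symm.invariant hP (.inl (.refl a)), h.symm.invariant hP (.inr (.refl b))]

theorem RootedOn.of_pwedge_right (hab : a ≠ b)
    (h : (G.pwedge N a b a' b').RootedOn (inl a) (inl b) S) : N.RootedOn a' b' S.toRight := by
  let P q := N.Reach S.toRight (pwedgeProjRight G N a b a' b' q) a' ∨
    N.Reach S.toRight (pwedgeProjRight G N a b a' b' q) b'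
  have hP_inl : ∀ v, P (inl v) := fun v => by
    rcases pwedgeProjRight_inl (G := G) (N := N) (a := a) (b := b) (a' := a') (b' := b') v
      with h | h <;> simp only [P, h]
    exacts [.inl (.refl a'), .inr (.refl b')]
  have hP := pwedge_forall_ends (P := fun q q' => P q → P q')
    (fun _ _ _ _ c' _ _ => hP_inl c')
    fun e he c hc c' hc' hPc => by
      simp only [P, pwedgeProjRight_pwedgeRight hab] at hPc ⊢
      exact hPc.imp (Reach.of_mem_ends he hc' hc).trans (Reach.of_mem_ends he hc' hc).trans
  intro w
  have hw : P (G.pwedgeRight N a b a' b' w) := by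
    rcases h (G.pwedgeRight N a b a' b' w) with h | h
    exacts [h.symm.invariant hP (hP_inl a), h.symm.invariant hP (hP_inl b)]
  simpa only [P, pwedgeProjRight_pwedgeRight hab] using hw

theorem reach_pwedge_iff (ha'b' : a' ≠ b') :
    (G.pwedge N a b a' b').Reach S (inl a) (inl b) ↔
      G.Reach S.toLeft a b ∨ N.Reach S.toRight a' b' := by
  refine ⟨fun h => ?_, fun h => h.elim Reach.pwedge_inl fun h => ?_⟩
  · by_contra! hn
    obtain ⟨hG, hN⟩ := hn
    -- Since neither side joins its terminals, this labelling is constant along edges.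
    let P : (G.pwedge N a b a' b').V → Prop :=
      Sum.elim (G.Reach S.toLeft · a) (N.Reach S.toRight ·.1 a')
    have hP_right : ∀ w, P (G.pwedgeRight N a b a' b' w) ↔ N.Reach S.toRight w a' := by
      intro w
      by_cases h₁ : w = a'
      · subst h₁
        simp only [pwedgeRight_left, P, Sum.elim_inl]
        exact iff_of_true (.refl a) (.refl w)
      by_cases h₂ : w = b'
      · subst h₂
        rw [pwedgeRight_right (Ne.symm h₁)]
        exact ⟨fun h => absurd h.symm hG, fun h => absurd h.symm hN⟩
      · rw [pwedgeRight_of_ne h₁ h₂]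
        rfl
    have hP := pwedge_forall_ends (P := fun q q' => P q → P q')
      (fun e he c hc c' hc' => (Reach.of_mem_ends he hc' hc).trans)
      fun e he c hc c' hc' hPc =>
        (hP_right c').mpr ((Reach.of_mem_ends he hc' hc).trans ((hP_right c).mp hPc))
    exact hG (h.invariant hP (Reach.refl a)).symm
  · simpa [pwedgeRight_right ha'b'] using h.pwedgeRight (G := G) (a := a) (b := b)

theorem rootedOn_pwedge_iff (hab : a ≠ b) (ha'b' : a' ≠ b') :
    (G.pwedge N a b a' b').RootedOn (inl a) (inl b) S ↔
      G.RootedOn a b S.toLeft ∧ N.RootedOn a' b' S.toRight := by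
  refine ⟨fun h => ⟨h.of_pwedge_left, h.of_pwedge_right hab⟩, fun ⟨hG, hN⟩ => ?_⟩
  refine pwedge_forall.mpr ⟨fun v => (hG v).imp Reach.pwedge_inl Reach.pwedge_inl,
    fun w => (hN w).imp (fun h => ?_) (fun h => ?_)⟩
  · simpa using h.pwedgeRight (G := G) (a := a) (b := b)
  · simpa [pwedgeRight_right ha'b'] using h.pwedgeRight (G := G) (a := a) (b := b)

theorem connectedOn_pwedge_iff (hab : a ≠ b) (ha'b' : a' ≠ b') :
    (G.pwedge N a b a' b').ConnectedOn S ↔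
      G.ConnectedOn S.toLeft ∧ N.ConnectedOn S.toRight ∨
        G.ConnectedOn S.toLeft ∧ N.SplitOn a' b' S.toRight ∨
          G.SplitOn a b S.toLeft ∧ N.ConnectedOn S.toRight := by
  rw [connectedOn_iff_rootedOn (inl a) (inl b), rootedOn_pwedge_iff hab ha'b',
    reach_pwedge_iff ha'b', connectedOn_iff_rootedOn a b, connectedOn_iff_rootedOn a' b']
  unfold SplitOn
  tauto

theorem splitOn_pwedge_iff (hab : a ≠ b) (ha'b' : a' ≠ b') :
    (G.pwedge N a b a' b').SplitOn (inl a) (inl b) S ↔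
      G.SplitOn a b S.toLeft ∧ N.SplitOn a' b' S.toRight := by
  unfold SplitOn
  rw [rootedOn_pwedge_iff hab ha'b', reach_pwedge_iff ha'b']
  tauto

variable (G N)

theorem rel_pwedge (hab : a ≠ b) (ha'b' : a' ≠ b') :
    (G.pwedge N a b a' b').rel
      = G.rel * N.rel + (G.rel * N.splitPoly a' b' + G.splitPoly a b * N.rel) := by
  rw [rel_eq_survivalPoly, survivalPoly_congr fun _ => connectedOn_pwedge_iff hab ha'b',
    survivalPoly_or, survivalPoly_or]
  · exact congrArg₂ (· + ·) (survivalPoly_toLeft_and_toRight _ _) <|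
      congrArg₂ (· + ·) (survivalPoly_toLeft_and_toRight _ _)
        (survivalPoly_toLeft_and_toRight _ _)
  · rintro _ ⟨⟨hG, -⟩, hG', -⟩
    exact hG.not_splitOn hG'
  · rintro _ ⟨⟨hG, hN⟩, ⟨-, hN'⟩ | ⟨hG', -⟩⟩
    exacts [hN.not_splitOn hN', hG.not_splitOn hG']

theorem splitPoly_pwedge (hab : a ≠ b) (ha'b' : a' ≠ b') :
    (G.pwedge N a b a' b').splitPoly (inl a) (inl b) = G.splitPoly a b * N.splitPoly a' b' :=
  (survivalPoly_congr fun _ => splitOn_pwedge_iff hab ha'b').trans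
    (survivalPoly_toLeft_and_toRight _ _)

end Pwedge

end Multigraph

theorem IsSP.ne {G : Multigraph} {a b : G.V} (h : IsSP G a b) : a ≠ b := by
  induction h with
  | edge _ _ _ hab => exact hab
  | series => exact Sum.inl_ne_inr
  | parallel _ _ ih => exact fun h => ih (Sum.inl_injective h)

theorem Complex.norm_add_one_lt_norm_iff (z : ℂ) : ‖z + 1‖ < ‖z‖ ↔ z.re < -(1 / 2) := by
  rw [← sq_lt_sq₀ (norm_nonneg _) (norm_nonneg _), Complex.sq_norm, Complex.sq_norm,
    Complex.normSq_add]
  simp only [map_one, mul_one]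
  constructor <;> intro h <;> linarith

def DiscPair (R T : ℂ) : Prop := R ≠ 0 ∧ ‖T + R‖ < ‖T‖

theorem discPair_iff {R T : ℂ} (hR : R ≠ 0) : DiscPair R T ↔ (T / R).re < -(1 / 2) := by
  rw [DiscPair, and_iff_right hR, ← Complex.norm_add_one_lt_norm_iff,
    show T / R + 1 = (T + R) / R by field_simp, norm_div, norm_div,
    div_lt_div_iff_of_pos_right (norm_pos_iff.mpr hR)]

theorem discPair_one_sub {q : ℂ} (hq : 1 < ‖q‖) : DiscPair (1 - q) q := by
  refine ⟨fun h => by simp [sub_eq_zero.mp h |>.symm] at hq, ?_⟩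
  simpa using hq

theorem DiscPair.series {R₁ T₁ R₂ T₂ : ℂ} (h₁ : DiscPair R₁ T₁) (h₂ : DiscPair R₂ T₂) :
    DiscPair (R₁ * R₂) (R₁ * T₂ + T₁ * R₂) := by
  have hsum : (R₁ * T₂ + T₁ * R₂) / (R₁ * R₂) = T₁ / R₁ + T₂ / R₂ := by
    field_simp [h₁.1, h₂.1]
    ring
  rw [discPair_iff (mul_ne_zero h₁.1 h₂.1), hsum, Complex.add_re]
  linarith [(discPair_iff h₁.1).1 h₁, (discPair_iff h₂.1).1 h₂]

theorem DiscPair.parallel {R₁ T₁ R₂ T₂ : ℂ} (h₁ : DiscPair R₁ T₁) (h₂ : DiscPair R₂ T₂) :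
    DiscPair (R₁ * R₂ + (R₁ * T₂ + T₁ * R₂)) (T₁ * T₂) := by
  have hsum : T₁ * T₂ + (R₁ * R₂ + (R₁ * T₂ + T₁ * R₂)) = (T₁ + R₁) * (T₂ + R₂) := by ring
  have hlt : ‖(T₁ + R₁) * (T₂ + R₂)‖ < ‖T₁ * T₂‖ := by
    rw [norm_mul, norm_mul]
    exact mul_lt_mul'' h₁.2 h₂.2 (norm_nonneg _) (norm_nonneg _)
  refine ⟨fun h0 => ?_, hsum ▸ hlt⟩
  rw [h0, add_zero] at hsum
  exact hlt.ne (congrArg norm hsum.symm)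

open Multigraph in
theorem discPair_of_isSP {q : ℂ} (hq : 1 < ‖q‖) {G : Multigraph} {a b : G.V} (h : IsSP G a b) :
    DiscPair (G.rel.eval q) ((G.splitPoly a b).eval q) := by
  induction h with
  | edge G a b hab hV hE =>
    obtain ⟨e, he, hends⟩ := hE
    rw [rel_single_edge hab hV he hends, splitPoly_single_edge hab hV he hends]
    simpa using discPair_one_sub hq
  | @series G N a b a' b' _ _ h ihG ihN =>
    rw [rel_wedge, splitPoly_wedge G N b a' h]
    simpa only [eval_mul, eval_add] using ihG.series ihN
  | parallel hG hN ihG ihN =>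
    rw [rel_pwedge _ _ hG.ne hN.ne, splitPoly_pwedge _ _ hG.ne hN.ne]
    simpa only [eval_mul, eval_add] using ihG.parallel ihN

open Multigraph in
theorem InSPclass.rel_eval_ne_zero {q : ℂ} (hq : 1 < ‖q‖) {G : Multigraph} (h : InSPclass G) :
    G.rel.eval q ≠ 0 := by
  induction h with
  | vertex G hV _ hE => simp [rel_of_subsingleton hV]
  | sp h => exact (discPair_of_isSP hq h).1
  | glue x y _ _ ihG ihN => simpa [rel_wedge] using ⟨ihG, ihN⟩
  | iso _ h ih => rwa [rel_eq_of_isIsoTo h]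

/-- Theorem 0.2: if `G` is a connected multigraph each of whose two-connected components is
a series-parallel network, then every complex zero of `R_G` lies in the closed unit disc. -/
theorem stmt18 (G : Multigraph) (hG : InSPclass G) :
    ∀ q : ℂ, (G.rel).eval q = 0 → ‖q‖ ≤ 1 :=
  fun _ h => not_lt.mp fun hq => hG.rel_eval_ne_zero hq h
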